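/- arXiv:2301.01846 — 2 statements merged into one kernel-verified Lean document; each statement's English description precedes it below -/
import Mathlib

section
/- Under the standard smooth setup, fix t > 0 and let Ω^t = {(x₁,x₂) ∈ ℝ²: x₁² ≤ x₂ ≤ x₁² + ξ²(t)} and let γ^t be the curve Γ^t restricted to τ ∈ [0,t]. For every point (y₁,y₂) ∈ Ω^t there exist unique τ = 𝒯(y₁,y₂,t) ∈ [0,t] and u = U(y₁,y₂,t) ∈ ℝ such that y₁ = u + γ₁^t(τ) and y₂ = u² + 2u·γ₁^t(τ) + γ₂^t(τ). Moreover, for any c ∈ ℝ: 𝒯(y₁+c, y₂+2cy₁+c², t) = 𝒯(y₁,y₂,t) and U(y₁+c, y₂+2cy₁+c², t) = U(y₁,y₂,t)+c. -/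
/-!
With `A(s) = s²ξ²(s)`, the height `γ₂ − γ₁²` of the curve above the parabola `x₂ = x₁²` is
`(A(τ) + A'(τ)(t − τ))/t²`: the tangent line to `A` at `τ`, evaluated at `t` and divided by `t²`.
Since `A` is strictly convex, this increases strictly in `τ` (its derivative is
`A''(τ)(t − τ)/t²`), from `0` at `τ = 0` to `ξ²(t)` at `τ = t`. The parabolic shift by `u`
preserves `x₂ − x₁²`, so `τ` is the unique parameter whose height is `y₂ − y₁²`, and then
`u = y₁ − γ₁(τ)`. Continuity at `τ = 0` needs `A'(0⁺) = 0`, which follows from convexity of `A`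
together with `A(s)/s = sξ²(s) → 0`.
-/

open Filter Set Topology

theorem tendsto_mul_nhdsGT_zero {c : ℝ} (hc : 0 < c) :
    Tendsto (fun x => c * x) (𝓝[>] 0) (𝓝[>] 0) := by
  refine tendsto_nhdsWithin_of_tendsto_nhds_of_eventually_within _ ?_ ?_
  · simpa using ((continuous_const_mul c).tendsto 0).mono_left nhdsWithin_le_nhds
  · filter_upwards [self_mem_nhdsWithin] with x hx using mul_pos hc hx

theorem ConvexOn.tendsto_nhdsGT_zero_of_hasDerivAt {f f' : ℝ → ℝ} (hfc : ConvexOn ℝ (Ioi 0) f)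
    (hf : ∀ x > 0, HasDerivAt f (f' x) x) (hf_nonneg : ∀ x > 0, 0 ≤ f x)
    (hf_div : Tendsto (fun x => f x / x) (𝓝[>] 0) (𝓝 0)) :
    Tendsto f' (𝓝[>] 0) (𝓝 0) := by
  have hscale (c : ℝ) (hc : 0 < c) :
      Tendsto (fun x => f (c * x) / (c * x)) (𝓝[>] 0) (𝓝 0) :=
    hf_div.comp (tendsto_mul_nhdsGT_zero hc)
  -- the slopes of `f` over `[x/2, x]` and `[x, 2x]` squeeze `f' x`
  refine tendsto_of_tendsto_of_tendsto_of_le_of_le' (by simpa using (hscale 2⁻¹ (by norm_num)).neg)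
    (by simpa using (hscale 2 two_pos).const_mul 2) ?_ ?_ <;>
    filter_upwards [self_mem_nhdsWithin] with x (hx : 0 < x)
  · have h := hfc.slope_le_of_hasDerivAt (x := 2⁻¹ * x) (by simp [hx]) hx (by linarith) (hf x hx)
    rw [slope_def_field] at h
    calc -(f (2⁻¹ * x) / (2⁻¹ * x)) ≤ (f x - f (2⁻¹ * x)) / (x - 2⁻¹ * x) := by
          rw [show x - 2⁻¹ * x = 2⁻¹ * x by ring, neg_div']
          gcongr
          linarith [hf_nonneg x hx]
      _ ≤ f' x := h
  · have h := hfc.le_slope_of_hasDerivAt hx (show 2 * x ∈ Ioi 0 by simp [hx]) (by linarith)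
      (hf x hx)
    rw [slope_def_field] at h
    calc f' x ≤ (f (2 * x) - f x) / (2 * x - x) := h
      _ ≤ 2 * (f (2 * x) / (2 * x)) := by
          rw [show 2 * x - x = x by ring, mul_div_assoc', mul_div_mul_left _ _ two_ne_zero]
          gcongr
          linarith [hf_nonneg x hx]

theorem hasDerivAt_tangentLine {A : ℝ → ℝ} {t τ a : ℝ} (hA : DifferentiableAt ℝ A τ)
    (hA' : HasDerivAt (deriv A) a τ) :
    HasDerivAt (fun s => A s + deriv A s * (t - s)) (a * (t - τ)) τ := by
  refine (hA.hasDerivAt.fun_add (hA'.fun_mul ((hasDerivAt_id' τ).const_sub t))).congr_deriv ?_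
  ring

theorem continuousOn_Icc_of_eq_tangentLine {g A : ℝ → ℝ} {t : ℝ}
    (hg0 : g 0 = 0) (hg : ∀ τ > 0, g τ = (A τ + deriv A τ * (t - τ)) / t ^ 2)
    (hA : ∀ τ > 0, DifferentiableAt ℝ A τ) (hA' : ∀ τ > 0, DifferentiableAt ℝ (deriv A) τ)
    (hA0 : Tendsto A (𝓝[>] 0) (𝓝 0)) (hA'0 : Tendsto (deriv A) (𝓝[>] 0) (𝓝 0)) :
    ContinuousOn g (Icc 0 t) := by
  intro τ hτ
  rcases hτ.1.eq_or_lt with rfl | hτ0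
  · refine (continuousWithinAt_Ioi_iff_Ici.1 ?_).mono Icc_subset_Ici_self
    rw [ContinuousWithinAt, hg0]
    have : Tendsto (fun s => (A s + deriv A s * (t - s)) / t ^ 2) (𝓝[>] 0) (𝓝 0) := by
      have ht : Tendsto (fun s => t - s) (𝓝[>] 0) (𝓝 (t - 0)) :=
        (continuous_sub_left t).continuousAt.tendsto.mono_left nhdsWithin_le_nhds
      simpa using ((hA0.add (hA'0.mul ht)).div_const (t ^ 2))
    exact this.congr' (eventually_nhdsWithin_of_forall fun s hs => (hg s hs).symm)
  · have := (hasDerivAt_tangentLine (t := t) (hA τ hτ0) (hA' τ hτ0).hasDerivAt).continuousAt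
    have hg_nhds : (fun s => (A s + deriv A s * (t - s)) / t ^ 2) =ᶠ[𝓝 τ] g :=
      eventually_of_mem (Ioi_mem_nhds hτ0) fun s hs => (hg s hs).symm
    exact ((this.div_const (t ^ 2)).congr hg_nhds).continuousWithinAt

theorem strictMonoOn_Icc_of_eq_tangentLine {g A A'' : ℝ → ℝ} {t : ℝ}
    (hg_cont : ContinuousOn g (Icc 0 t)) (hg : ∀ τ > 0, g τ = (A τ + deriv A τ * (t - τ)) / t ^ 2)
    (hA : ∀ τ > 0, DifferentiableAt ℝ A τ) (hA'' : ∀ τ > 0, HasDerivAt (deriv A) (A'' τ) τ)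
    (hA''_pos : ∀ τ > 0, 0 < A'' τ) :
    StrictMonoOn g (Icc 0 t) := by
  refine strictMonoOn_of_deriv_pos (convex_Icc 0 t) hg_cont fun τ hτ => ?_
  rw [interior_Icc] at hτ
  have hg_deriv : HasDerivAt g (A'' τ * (t - τ) / t ^ 2) τ :=
    ((hasDerivAt_tangentLine (hA τ hτ.1) (hA'' τ hτ.1)).div_const _).congr_of_eventuallyEq
      (eventually_of_mem (Ioi_mem_nhds hτ.1) hg)
  rw [hg_deriv.deriv]
  exact div_pos (mul_pos (hA''_pos τ hτ.1) (sub_pos.2 hτ.2)) (pow_pos (hτ.1.trans hτ.2) 2)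

theorem hasDerivAt_sq_mul_sq {ξ : ℝ → ℝ} {x d : ℝ} (h : HasDerivAt ξ d x) :
    HasDerivAt (fun s => s ^ 2 * ξ s ^ 2) (2 * x * ξ x ^ 2 + 2 * x ^ 2 * (ξ x * d)) x := by
  refine ((hasDerivAt_pow 2 x).fun_mul (h.fun_pow 2)).congr_deriv ?_
  ring

theorem tendsto_sq_mul_sq_nhdsGT_zero {ξ : ℝ → ℝ} (hξ0 : Tendsto ξ (𝓝[>] 0) (𝓝 0)) :
    Tendsto (fun s => s ^ 2 * ξ s ^ 2) (𝓝[>] 0) (𝓝 0) := by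
  simpa using (((continuous_pow 2).tendsto 0).mono_left nhdsWithin_le_nhds).mul (hξ0.pow 2)

theorem tendsto_deriv_sq_mul_sq_nhdsGT_zero {ξ A'' : ℝ → ℝ}
    (hξ0 : Tendsto ξ (𝓝[>] 0) (𝓝 0)) (hξ : ∀ x > 0, DifferentiableAt ℝ ξ x)
    (hA'' : ∀ x > 0, HasDerivAt (deriv fun s => s ^ 2 * ξ s ^ 2) (A'' x) x)
    (hA''_nonneg : ∀ x > 0, 0 ≤ A'' x) :
    Tendsto (deriv fun s => s ^ 2 * ξ s ^ 2) (𝓝[>] 0) (𝓝 0) := by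
  have hA (x : ℝ) (hx : 0 < x) : DifferentiableAt ℝ (fun s => s ^ 2 * ξ s ^ 2) x :=
    (differentiableAt_pow 2).mul ((hξ x hx).pow 2)
  have hconv : ConvexOn ℝ (Ioi 0) fun s => s ^ 2 * ξ s ^ 2 := by
    refine convexOn_of_hasDerivWithinAt2_nonneg (f' := deriv fun s => s ^ 2 * ξ s ^ 2)
      (f'' := A'') (convex_Ioi 0)
      (fun x hx => (hA x hx).continuousAt.continuousWithinAt) ?_ ?_ ?_ <;>
      simp only [interior_Ioi]
    · exact fun x hx => (hA x hx).hasDerivAt.hasDerivWithinAt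
    · exact fun x hx => (hA'' x hx).hasDerivWithinAt
    · exact hA''_nonneg
  refine hconv.tendsto_nhdsGT_zero_of_hasDerivAt (fun x hx => (hA x hx).hasDerivAt)
    (fun x _ => by positivity) ?_
  have : Tendsto (fun x => x * ξ x ^ 2) (𝓝[>] 0) (𝓝 0) := by
    simpa using (continuous_id.tendsto 0).mono_left nhdsWithin_le_nhds |>.mul (hξ0.pow 2)
  refine this.congr' (eventually_nhdsWithin_of_forall fun x (hx : 0 < x) => ?_)
  field_simp

def parabolaGap (γ₁ γ₂ : ℝ → ℝ) (τ : ℝ) : ℝ := γ₂ τ - γ₁ τ ^ 2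

theorem parabolaGap_eq_of_eq {γ₁ γ₂ : ℝ → ℝ} {y₁ y₂ τ u : ℝ} (h₁ : y₁ = u + γ₁ τ)
    (h₂ : y₂ = u ^ 2 + 2 * u * γ₁ τ + γ₂ τ) : parabolaGap γ₁ γ₂ τ = y₂ - y₁ ^ 2 := by
  rw [parabolaGap, h₁, h₂]
  ring

theorem existsUnique_of_injOn_parabolaGap {γ₁ γ₂ : ℝ → ℝ} {s : Set ℝ} {y₁ y₂ : ℝ}
    (hinj : InjOn (parabolaGap γ₁ γ₂) s) (hy : y₂ - y₁ ^ 2 ∈ parabolaGap γ₁ γ₂ '' s) :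
    ∃! p : ℝ × ℝ, p.1 ∈ s ∧ y₁ = p.2 + γ₁ p.1 ∧ y₂ = p.2 ^ 2 + 2 * p.2 * γ₁ p.1 + γ₂ p.1 := by
  obtain ⟨τ, hτ, hgap⟩ := hy
  refine ⟨(τ, y₁ - γ₁ τ), ⟨hτ, by ring, by rw [parabolaGap] at hgap; linear_combination -hgap⟩, ?_⟩
  rintro ⟨τ', u'⟩ ⟨hτ', h₁, h₂⟩
  obtain rfl : τ' = τ := hinj hτ' hτ ((parabolaGap_eq_of_eq h₁ h₂).trans hgap.symm)
  exact Prod.ext rfl (by dsimp only; linarith)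

theorem eq_add_of_injOn_parabolaGap {γ₁ γ₂ : ℝ → ℝ} {s : Set ℝ} {y₁ y₂ c τ u τ' u' : ℝ}
    (hinj : InjOn (parabolaGap γ₁ γ₂) s) (hτ : τ ∈ s) (hτ' : τ' ∈ s)
    (h₁ : y₁ = u + γ₁ τ) (h₂ : y₂ = u ^ 2 + 2 * u * γ₁ τ + γ₂ τ)
    (h₁' : y₁ + c = u' + γ₁ τ') (h₂' : y₂ + 2 * c * y₁ + c ^ 2 = u' ^ 2 + 2 * u' * γ₁ τ' + γ₂ τ') :
    τ' = τ ∧ u' = u + c := by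
  obtain rfl : τ' = τ := hinj hτ' hτ (by
    rw [parabolaGap_eq_of_eq h₁' h₂', parabolaGap_eq_of_eq h₁ h₂]
    ring)
  exact ⟨rfl, by linarith⟩

theorem parabolaGap_eq_tangentLine {ξ ξ' γ₁ γ₂ : ℝ → ℝ} {t τ : ℝ} (ht : t ≠ 0) (hτ : 0 < τ)
    (hξ : 0 < ξ τ) (hξ' : HasDerivAt ξ (ξ' τ) τ) (hξ'_pos : 0 < ξ' τ)
    (hγ1 : ∀ τ, γ₁ τ = (τ / t) * Real.sqrt (ξ τ ^ 2 + 2 * τ * ξ τ * ξ' τ))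
    (hγ2 : ∀ τ, γ₂ τ =
      (τ / t) * ((Real.sqrt (ξ τ ^ 2 + 2 * τ * ξ τ * ξ' τ)) ^ 2 + ξ τ ^ 2)) :
    parabolaGap γ₁ γ₂ τ =
      (τ ^ 2 * ξ τ ^ 2 + deriv (fun s => s ^ 2 * ξ s ^ 2) τ * (t - τ)) / t ^ 2 := by
  have hr : 0 ≤ ξ τ ^ 2 + 2 * τ * ξ τ * ξ' τ := by positivity
  rw [parabolaGap, hγ1, hγ2, mul_pow, Real.sq_sqrt hr, (hasDerivAt_sq_mul_sq hξ').deriv]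
  field_simp
  ring

theorem statement10_general (ξ ξ' A'' : ℝ → ℝ)
    (hpos : ∀ t > 0, 0 < ξ t)
    (hξ0 : Filter.Tendsto ξ (nhdsWithin 0 (Set.Ioi 0)) (nhds 0))
    (hderiv : ∀ t > 0, HasDerivAt ξ (ξ' t) t)
    (hξ'pos : ∀ t > 0, 0 < ξ' t)
    (hA'' : ∀ t > 0, HasDerivAt (deriv (fun t => t ^ 2 * ξ t ^ 2)) (A'' t) t)
    (hA''pos : ∀ t > 0, 0 < A'' t)
    (γ₁ γ₂ : ℝ → ℝ)
    (t : ℝ) (ht : 0 < t)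
    (hγ1 : ∀ τ, γ₁ τ = (τ / t) * Real.sqrt (ξ τ ^ 2 + 2 * τ * ξ τ * ξ' τ))
    (hγ2 : ∀ τ, γ₂ τ =
      (τ / t) * ((Real.sqrt (ξ τ ^ 2 + 2 * τ * ξ τ * ξ' τ)) ^ 2 + ξ τ ^ 2)) :
    ∀ y₁ y₂ : ℝ, y₁ ^ 2 ≤ y₂ → y₂ ≤ y₁ ^ 2 + ξ t ^ 2 →
      (∃! p : ℝ × ℝ, p.1 ∈ Set.Icc (0 : ℝ) t ∧
        y₁ = p.2 + γ₁ p.1 ∧ y₂ = p.2 ^ 2 + 2 * p.2 * γ₁ p.1 + γ₂ p.1) ∧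
      (∀ c τ u τ' u' : ℝ, τ ∈ Set.Icc (0 : ℝ) t → τ' ∈ Set.Icc (0 : ℝ) t →
        (y₁ = u + γ₁ τ ∧ y₂ = u ^ 2 + 2 * u * γ₁ τ + γ₂ τ) →
        (y₁ + c = u' + γ₁ τ' ∧
          y₂ + 2 * c * y₁ + c ^ 2 = u' ^ 2 + 2 * u' * γ₁ τ' + γ₂ τ') →
        τ' = τ ∧ u' = u + c) := by
  have hA (x : ℝ) (hx : 0 < x) : DifferentiableAt ℝ (fun s => s ^ 2 * ξ s ^ 2) x :=
    (hasDerivAt_sq_mul_sq (hderiv x hx)).differentiableAt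
  have hgap (τ : ℝ) (hτ : 0 < τ) := parabolaGap_eq_tangentLine ht.ne' hτ (hpos τ hτ)
    (hderiv τ hτ) (hξ'pos τ hτ) hγ1 hγ2
  have hgap0 : parabolaGap γ₁ γ₂ 0 = 0 := by simp [parabolaGap, hγ1, hγ2]
  have hgapt : parabolaGap γ₁ γ₂ t = ξ t ^ 2 := by
    rw [hgap t ht, sub_self, mul_zero, add_zero, mul_div_cancel_left₀ _ (pow_ne_zero 2 ht.ne')]
  have hcont : ContinuousOn (parabolaGap γ₁ γ₂) (Icc 0 t) :=
    continuousOn_Icc_of_eq_tangentLine hgap0 hgap hA (fun x hx => (hA'' x hx).differentiableAt)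
      (tendsto_sq_mul_sq_nhdsGT_zero hξ0)
      (tendsto_deriv_sq_mul_sq_nhdsGT_zero hξ0 (fun x hx => (hderiv x hx).differentiableAt) hA''
        fun x hx => (hA''pos x hx).le)
  have hinj : InjOn (parabolaGap γ₁ γ₂) (Icc 0 t) :=
    (strictMonoOn_Icc_of_eq_tangentLine hcont hgap hA hA'' hA''pos).injOn
  intro y₁ y₂ hy₁ hy₂
  have hy : y₂ - y₁ ^ 2 ∈ parabolaGap γ₁ γ₂ '' Icc 0 t :=
    intermediate_value_Icc ht.le hcont ⟨by linarith, by linarith⟩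
  exact ⟨existsUnique_of_injOn_parabolaGap hinj hy, fun c τ u τ' u' hτ hτ' ⟨h₁, h₂⟩ ⟨h₁', h₂'⟩ =>
    eq_add_of_injOn_parabolaGap hinj hτ hτ' h₁ h₂ h₁' h₂'⟩

/-- Under the smooth setup, fix `t > 0` and let
`γ^t(τ) = ((τ/t)r(τ), (τ/t)(r²(τ)+ξ²(τ)))`, `τ ∈ [0,t]`. For every point `(y₁,y₂)` in the
parabolic strip `Ω^t = {x₁² ≤ x₂ ≤ x₁² + ξ²(t)}` there exist unique `τ ∈ [0,t]` and `u ∈ ℝ`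
with `y₁ = u + γ₁^t(τ)` and `y₂ = u² + 2uγ₁^t(τ) + γ₂^t(τ)`. Moreover, under the parabolic
shift `(y₁,y₂) ↦ (y₁+c, y₂+2cy₁+c²)`, the parameter `τ` is unchanged and `u` becomes `u+c`. -/
theorem statement10 (ξ ξ' A'' : ℝ → ℝ)
    (hsmooth : ContDiffOn ℝ 2 ξ (Set.Ioi 0))
    (hpos : ∀ t > 0, 0 < ξ t)
    (hξ0 : Filter.Tendsto ξ (nhdsWithin 0 (Set.Ioi 0)) (nhds 0))
    (hderiv : ∀ t > 0, HasDerivAt ξ (ξ' t) t)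
    (hξ'pos : ∀ t > 0, 0 < ξ' t)
    (hA'' : ∀ t > 0, HasDerivAt (deriv (fun t => t ^ 2 * ξ t ^ 2)) (A'' t) t)
    (hA''pos : ∀ t > 0, 0 < A'' t)
    (γ₁ γ₂ : ℝ → ℝ)
    (t : ℝ) (ht : 0 < t)
    (hγ1 : ∀ τ, γ₁ τ = (τ / t) * Real.sqrt (ξ τ ^ 2 + 2 * τ * ξ τ * ξ' τ))
    (hγ2 : ∀ τ, γ₂ τ =
      (τ / t) * ((Real.sqrt (ξ τ ^ 2 + 2 * τ * ξ τ * ξ' τ)) ^ 2 + ξ τ ^ 2)) :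
    ∀ y₁ y₂ : ℝ, y₁ ^ 2 ≤ y₂ → y₂ ≤ y₁ ^ 2 + ξ t ^ 2 →
      (∃! p : ℝ × ℝ, p.1 ∈ Set.Icc (0 : ℝ) t ∧
        y₁ = p.2 + γ₁ p.1 ∧ y₂ = p.2 ^ 2 + 2 * p.2 * γ₁ p.1 + γ₂ p.1) ∧
      (∀ c τ u τ' u' : ℝ, τ ∈ Set.Icc (0 : ℝ) t → τ' ∈ Set.Icc (0 : ℝ) t →
        (y₁ = u + γ₁ τ ∧ y₂ = u ^ 2 + 2 * u * γ₁ τ + γ₂ τ) →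
        (y₁ + c = u' + γ₁ τ' ∧
          y₂ + 2 * c * y₁ + c ^ 2 = u' ^ 2 + 2 * u' * γ₁ τ' + γ₂ τ') →
        τ' = τ ∧ u' = u + c) :=
  statement10_general ξ ξ' A'' hpos hξ0 hderiv hξ'pos hA'' hA''pos γ₁ γ₂ t ht hγ1 hγ2
end

section
/- Under the standard smooth setup, for any a ∈ ℝ, t > 0, any point x = (x₁,x₂) in Ω^t_a := {x ∈ Ω^t : U(x,t) ≥ a}, and any s ∈ (0,t), the point y = (a,a²) + (t/s)(x − (a,a²)) satisfies y₂ ≤ y₁² + ξ²(s). -/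
open Set

/-!
Write `x = (u + c, u² + 2uc + d)` with `c = γ₁^t(τ)`, `d = γ₂^t(τ)` and put `λ = t/s ≥ 1`.
Expanding, `y₁² + ξ²(s) - y₂ = λ(λ - 1)((u - a)² + 2(u - a)c) + ξ²(s) - (λd - λ²c²)`; the first
term is nonnegative because `u ≥ a`, and `λd - λ²c² = (A(τ) + A′(τ)(s - τ)) / s²` is the tangent
line of the convex function `A(t) = t²ξ²(t)` at `τ`, evaluated at `s`, hence at most
`A(s) / s² = ξ²(s)`.
-/

theorem ConvexOn.add_mul_sub_le_of_hasDerivAt {S : Set ℝ} {f : ℝ → ℝ} {f' x y : ℝ}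
    (hfc : ConvexOn ℝ S f) (hx : x ∈ S) (hy : y ∈ S) (hf : HasDerivAt f f' x) :
    f x + f' * (y - x) ≤ f y := by
  rcases lt_trichotomy x y with hxy | rfl | hyx
  · have := hfc.le_slope_of_hasDerivAt hx hy hxy hf
    rw [slope_def_field, le_div_iff₀ (sub_pos.2 hxy)] at this
    linarith
  · simp
  · have := hfc.slope_le_of_hasDerivAt hy hx hyx hf
    rw [slope_def_field, div_le_iff₀ (sub_pos.2 hyx)] at this
    linarith

theorem hasDerivAt_sq_mul_sq_s11 {ξ : ℝ → ℝ} {ξ' p : ℝ} (hξ : HasDerivAt ξ ξ' p) :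
    HasDerivAt (fun t => t ^ 2 * ξ t ^ 2) (2 * p * ξ p ^ 2 + 2 * p ^ 2 * ξ p * ξ') p :=
  ((hasDerivAt_pow 2 p).fun_mul (hξ.fun_pow 2)).congr_deriv (by push_cast; ring)

section TangentLine

variable {ξ ξ' A'' : ℝ → ℝ}

theorem convexOn_sq_mul_sq (hderiv : ∀ t > 0, HasDerivAt ξ (ξ' t) t)
    (hA'' : ∀ t > 0, HasDerivAt (deriv (fun t => t ^ 2 * ξ t ^ 2)) (A'' t) t)
    (hA''nonneg : ∀ t > 0, 0 ≤ A'' t) :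
    ConvexOn ℝ (Ioi 0) (fun t => t ^ 2 * ξ t ^ 2) := by
  have hA' : ∀ t > 0, HasDerivAt (fun t => t ^ 2 * ξ t ^ 2)
      (deriv (fun t => t ^ 2 * ξ t ^ 2) t) t :=
    fun t ht => (hasDerivAt_sq_mul_sq_s11 (hderiv t ht)).differentiableAt.hasDerivAt
  refine convexOn_of_hasDerivWithinAt2_nonneg (f' := deriv fun t => t ^ 2 * ξ t ^ 2)
    (f'' := A'') (convex_Ioi 0) (fun t ht => (hA' t ht).continuousAt.continuousWithinAt)
    ?_ ?_ ?_ <;>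
    simp only [interior_Ioi]
  · exact fun t ht => (hA' t ht).hasDerivWithinAt
  · exact fun t ht => (hA'' t ht).hasDerivWithinAt
  · exact hA''nonneg

/-- The left-hand side is `λγ₂^t(τ) - (λγ₁^t(τ))²` for `λ = t/s`, with
`r²(τ) = ξ²(τ) + 2τξ(τ)ξ′(τ)` written out. -/
theorem scaled_curve_le_sq (hderiv : ∀ t > 0, HasDerivAt ξ (ξ' t) t)
    (hA'' : ∀ t > 0, HasDerivAt (deriv (fun t => t ^ 2 * ξ t ^ 2)) (A'' t) t)
    (hA''nonneg : ∀ t > 0, 0 ≤ A'' t) {τ s : ℝ} (hτ : 0 ≤ τ) (hs : 0 < s) :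
    (τ / s) * ((ξ τ ^ 2 + 2 * τ * ξ τ * ξ' τ) + ξ τ ^ 2)
      - (τ / s) ^ 2 * (ξ τ ^ 2 + 2 * τ * ξ τ * ξ' τ) ≤ ξ s ^ 2 := by
  rcases hτ.eq_or_lt with rfl | hτ
  · simpa using sq_nonneg (ξ s)
  have htangent := (convexOn_sq_mul_sq hderiv hA'' hA''nonneg).add_mul_sub_le_of_hasDerivAt
    hτ hs (hasDerivAt_sq_mul_sq_s11 (hderiv τ hτ))
  have hlhs : (τ / s) * ((ξ τ ^ 2 + 2 * τ * ξ τ * ξ' τ) + ξ τ ^ 2)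
      - (τ / s) ^ 2 * (ξ τ ^ 2 + 2 * τ * ξ τ * ξ' τ)
      = (τ ^ 2 * ξ τ ^ 2 + (2 * τ * ξ τ ^ 2 + 2 * τ ^ 2 * ξ τ * ξ' τ) * (s - τ)) / s ^ 2 := by
    field_simp
    ring
  rw [hlhs, div_le_iff₀ (by positivity)]
  linarith

end TangentLine

theorem dilation_below_shifted_parabola {a u c d e lam : ℝ} (hlam : 1 ≤ lam) (hu : a ≤ u)
    (hc : 0 ≤ c) (hcd : lam * d - lam ^ 2 * c ^ 2 ≤ e) :
    a ^ 2 + lam * (u ^ 2 + 2 * u * c + d - a ^ 2) ≤ (a + lam * (u + c - a)) ^ 2 + e := by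
  have hcross : 0 ≤ lam * (lam - 1) * ((u - a) ^ 2 + 2 * (u - a) * c) :=
    mul_nonneg (mul_nonneg (by linarith) (by linarith))
      (add_nonneg (sq_nonneg _) (by linarith [mul_nonneg (sub_nonneg.2 hu) hc]))
  linarith

theorem statement11_general (ξ ξ' A'' : ℝ → ℝ)
    (hpos : ∀ t > 0, 0 < ξ t)
    (hderiv : ∀ t > 0, HasDerivAt ξ (ξ' t) t)
    (hξ'pos : ∀ t > 0, 0 < ξ' t)
    (hA'' : ∀ t > 0, HasDerivAt (deriv (fun t => t ^ 2 * ξ t ^ 2)) (A'' t) t)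
    (hA''pos : ∀ t > 0, 0 < A'' t)
    (r : ℝ → ℝ) (hr : ∀ s, r s = Real.sqrt (ξ s ^ 2 + 2 * s * ξ s * ξ' s))
    (a t : ℝ) (ht : 0 < t)
    (x₁ x₂ : ℝ)
    (hU : ∃ τ ∈ Set.Icc (0 : ℝ) t, ∃ u : ℝ, a ≤ u ∧
      x₁ = u + (τ / t) * r τ ∧
      x₂ = u ^ 2 + 2 * u * ((τ / t) * r τ) + (τ / t) * (r τ ^ 2 + ξ τ ^ 2))
    (s : ℝ) (hs : s ∈ Set.Ioo 0 t) :
    a ^ 2 + (t / s) * (x₂ - a ^ 2) ≤ (a + (t / s) * (x₁ - a)) ^ 2 + ξ s ^ 2 := by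
  obtain ⟨τ, ⟨hτ, -⟩, u, hu, rfl, rfl⟩ := hU
  obtain ⟨hs, hst⟩ := hs
  have hr_sq : r τ ^ 2 = ξ τ ^ 2 + 2 * τ * ξ τ * ξ' τ := by
    rw [hr, Real.sq_sqrt]
    rcases hτ.eq_or_lt with rfl | hτ
    · simp [sq_nonneg]
    · have := mul_pos (mul_pos hτ (hpos τ hτ)) (hξ'pos τ hτ)
      nlinarith [sq_nonneg (ξ τ)]
  have hkey := scaled_curve_le_sq hderiv hA'' (fun t ht => (hA''pos t ht).le) hτ hs
  rw [← hr_sq] at hkey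
  refine dilation_below_shifted_parabola ((one_le_div hs).2 hst.le) hu
    (mul_nonneg (div_nonneg hτ ht.le) (hr τ ▸ Real.sqrt_nonneg _)) ?_
  have hscale : t / s * (τ / t * (r τ ^ 2 + ξ τ ^ 2)) - (t / s) ^ 2 * (τ / t * r τ) ^ 2
      = τ / s * (r τ ^ 2 + ξ τ ^ 2) - (τ / s) ^ 2 * r τ ^ 2 := by
    field_simp
  rwa [hscale]

/-- Under the smooth setup, for `a ∈ ℝ`, `t > 0`, a point `x = (x₁,x₂)` of the
strip `Ω^t` with `U(x,t) ≥ a` (i.e. `x` decomposes as `x₁ = u + γ₁^t(τ)`,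
`x₂ = u² + 2uγ₁^t(τ) + γ₂^t(τ)` with `τ ∈ [0,t]` and `u ≥ a`), and any `s ∈ (0,t)`, the
dilated point `y = (a,a²) + (t/s)(x − (a,a²))` satisfies `y₂ ≤ y₁² + ξ²(s)`. -/
theorem statement11 (ξ ξ' A'' : ℝ → ℝ)
    (hsmooth : ContDiffOn ℝ 2 ξ (Set.Ioi 0))
    (hpos : ∀ t > 0, 0 < ξ t)
    (hξ0 : Filter.Tendsto ξ (nhdsWithin 0 (Set.Ioi 0)) (nhds 0))
    (hderiv : ∀ t > 0, HasDerivAt ξ (ξ' t) t)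
    (hξ'pos : ∀ t > 0, 0 < ξ' t)
    (hA'' : ∀ t > 0, HasDerivAt (deriv (fun t => t ^ 2 * ξ t ^ 2)) (A'' t) t)
    (hA''pos : ∀ t > 0, 0 < A'' t)
    (r : ℝ → ℝ) (hr : ∀ s, r s = Real.sqrt (ξ s ^ 2 + 2 * s * ξ s * ξ' s))
    (a t : ℝ) (ht : 0 < t)
    (x₁ x₂ : ℝ)
    (hΩ : x₁ ^ 2 ≤ x₂ ∧ x₂ ≤ x₁ ^ 2 + ξ t ^ 2)
    (hU : ∃ τ ∈ Set.Icc (0 : ℝ) t, ∃ u : ℝ, a ≤ u ∧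
      x₁ = u + (τ / t) * r τ ∧
      x₂ = u ^ 2 + 2 * u * ((τ / t) * r τ) + (τ / t) * (r τ ^ 2 + ξ τ ^ 2))
    (s : ℝ) (hs : s ∈ Set.Ioo 0 t) :
    a ^ 2 + (t / s) * (x₂ - a ^ 2) ≤ (a + (t / s) * (x₁ - a)) ^ 2 + ξ s ^ 2 :=
  statement11_general ξ ξ' A'' hpos hderiv hξ'pos hA'' hA''pos r hr a t ht x₁ x₂ hU s hs
end
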